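/- arXiv:1109.4641 — 2 statements merged into one kernel-verified Lean document; each statement's English description precedes it below -/
import Mathlib

section
/- Define f̃ : ℝ^{n+1} → ℝ^{2n} by f̃(x₀, x₁, …, xₙ) = (x₁, x₀x₁, x₂, x₀x₂, …, xₙ, x₀xₙ). Then the restriction f of f̃ to the unit sphere S^n ⊂ ℝ^{n+1} is an immersion, i.e., for every p ∈ S^n the derivative of f̃ restricted to the tangent space T_p S^n is injective (has rank n). -/
/-!
The kernel of `d f̃_p` consists of the vectors `v` with `vⱼ = 0` and `p₀vⱼ + pⱼv₀ = 0` for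
`j ≥ 1`, i.e. of multiples `v = v₀e₀` with `v₀pⱼ = 0` for `j ≥ 1`. For such `v`,
`⟪v, p⟫ = v₀p₀`, so tangency to the sphere at `p` gives `v₀p = 0`, and `p ≠ 0` forces `v₀ = 0`.
-/

open scoped RealInnerProductSpace

/-- The map `f̃(x₀, x₁, …, xₙ) = (x₁, x₀x₁, …, xₙ, x₀xₙ)` from `ℝ^{n+1}` to `ℝ^{2n}`. -/
def ftilde (n : ℕ) (x : EuclideanSpace ℝ (Fin (n + 1))) : Fin n → ℝ × ℝ :=
  fun j => (x j.succ, x 0 * x j.succ)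

open EuclideanSpace in
theorem hasFDerivAt_ftilde (n : ℕ) (p : EuclideanSpace ℝ (Fin (n + 1))) :
    HasFDerivAt (ftilde n)
      (ContinuousLinearMap.pi fun j : Fin n =>
        (proj (𝕜 := ℝ) j.succ).prod (p 0 • proj j.succ + p j.succ • proj 0)) p := by
  have hproj : ∀ i, HasFDerivAt (fun x : EuclideanSpace ℝ (Fin (n + 1)) => x i)
      (proj i : EuclideanSpace ℝ (Fin (n + 1)) →L[ℝ] ℝ) p :=
    fun i => (proj (𝕜 := ℝ) i).hasFDerivAt
  exact hasFDerivAt_pi.2 fun j => (hproj j.succ).prodMk ((hproj 0).mul (hproj j.succ))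

theorem fderiv_ftilde_apply (n : ℕ) (p v : EuclideanSpace ℝ (Fin (n + 1))) :
    fderiv ℝ (ftilde n) p v = fun j => (v j.succ, p 0 * v j.succ + p j.succ * v 0) := by
  rw [(hasFDerivAt_ftilde n p).fderiv]
  rfl

theorem fderiv_ftilde_apply_eq_zero_iff (n : ℕ) (p v : EuclideanSpace ℝ (Fin (n + 1))) :
    fderiv ℝ (ftilde n) p v = 0 ↔ ∀ j : Fin n, v j.succ = 0 ∧ v 0 * p j.succ = 0 := by
  simp only [fderiv_ftilde_apply, funext_iff, Pi.zero_apply, Prod.ext_iff, Prod.fst_zero,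
    Prod.snd_zero]
  refine forall_congr' fun j => and_congr_right fun hj => ?_
  rw [hj, mul_zero, zero_add, mul_comm]

theorem inner_eq_mul_of_succ_eq_zero {n : ℕ} {v : EuclideanSpace ℝ (Fin (n + 1))}
    (hv : ∀ j : Fin n, v j.succ = 0) (p : EuclideanSpace ℝ (Fin (n + 1))) :
    ⟪v, p⟫ = v 0 * p 0 := by
  simp [PiLp.inner_apply, Fin.sum_univ_succ, hv, mul_comm]

/-- The restriction of `f̃` to the unit sphere `Sⁿ` is an immersion: at each point `p`
of the sphere, the derivative of `f̃` is injective on the tangent space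
`T_p Sⁿ = {v : ⟪v, p⟫ = 0}`. -/
theorem ftilde_immersion_on_sphere (n : ℕ) (p : EuclideanSpace ℝ (Fin (n + 1)))
    (hp : ‖p‖ = 1) (v : EuclideanSpace ℝ (Fin (n + 1))) (hv : ⟪v, p⟫ = 0)
    (hdv : fderiv ℝ (ftilde n) p v = 0) : v = 0 := by
  have hker := (fderiv_ftilde_apply_eq_zero_iff n p v).1 hdv
  have hsucc : ∀ j : Fin n, v j.succ = 0 := fun j => (hker j).1
  have hsmul : v 0 • p = 0 := by
    have h0 : v 0 * p 0 = 0 := inner_eq_mul_of_succ_eq_zero hsucc p ▸ hv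
    ext i
    exact Fin.cases h0 (fun j => (hker j).2) i
  have hp0 : p ≠ 0 := norm_ne_zero_iff.1 (hp ▸ one_ne_zero)
  have hv0 : v 0 = 0 := (smul_eq_zero.1 hsmul).resolve_right hp0
  ext i
  exact Fin.cases hv0 hsucc i
end

section
/- Suppose f, g : [a,b] → ℝ^{2n+1} are differentiable at a point p ∈ (a,b), their derivatives f'(p) and g'(p) lie in the kernel of the contact form α = dt + 2Σⱼ(xⱼdyⱼ − yⱼdxⱼ) at f(p) and g(p) respectively (i.e., are horizontal vectors for the Heisenberg structure), f(p) − g(p) lies in the center Z = {(z,t) : z = 0}, and f'(p) ≠ g'(p). Then p is an isolated point of the set S = {s ∈ [a,b] : f(s) − g(s) ∈ Z}. -/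
/-!
The `z`-component of `f - g` has derivative `f'(p).z - g'(p).z` at `p`, and it vanishes at `p`.
A horizontal vector is determined by its `z`-component and its base point's `z`-coordinate, since
the contact form fixes its `t`-component; so `f'(p) ≠ g'(p)` forces this derivative to be nonzero,
and a function with nonzero derivative takes its value at `p` nowhere else near `p`.
-/

def heisenbergContactForm {n : ℕ} (q v : (Fin n → ℝ × ℝ) × ℝ) : ℝ :=
  v.2 + 2 * ∑ j : Fin n, ((q.1 j).1 * (v.1 j).2 - (q.1 j).2 * (v.1 j).1)

theorem eq_of_heisenbergContactForm_eq_zero_of_fst_eq {n : ℕ} {q q' v w : (Fin n → ℝ × ℝ) × ℝ}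
    (hv : heisenbergContactForm q v = 0) (hw : heisenbergContactForm q' w = 0)
    (hq : q.1 = q'.1) (hvw : v.1 = w.1) : v = w := by
  refine Prod.ext hvw ?_
  unfold heisenbergContactForm at hv hw
  rw [hq, hvw] at hv
  linarith

theorem HasDerivAt.exists_pos_forall_eq_of_apply_eq {E : Type*} [NormedAddCommGroup E]
    [NormedSpace ℝ E] {F : ℝ → E} {F' : E} {p : ℝ} (hF : HasDerivAt F F' p) (hF' : F' ≠ 0) :
    ∃ ε > 0, ∀ s, F s = F p → |s - p| < ε → s = p := by
  obtain ⟨ε, hε, hball⟩ := Metric.mem_nhdsWithin_iff.1 (hF.eventually_ne hF' (c := F p))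
  refine ⟨ε, hε, fun s hs hsp => by_contra fun hne => hball ⟨?_, hne⟩ hs⟩
  rwa [Metric.mem_ball, Real.dist_eq]

theorem isolated_point_of_center_difference_general (n : ℕ) (a b : ℝ)
    (f g : ℝ → (Fin n → ℝ × ℝ) × ℝ) (p : ℝ)
    (f' g' : (Fin n → ℝ × ℝ) × ℝ)
    (hf : HasDerivAt f f' p) (hg : HasDerivAt g g' p)
    (hfhor : f'.2 + 2 * ∑ j : Fin n,
      (((f p).1 j).1 * (f'.1 j).2 - ((f p).1 j).2 * (f'.1 j).1) = 0)
    (hghor : g'.2 + 2 * ∑ j : Fin n,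
      (((g p).1 j).1 * (g'.1 j).2 - ((g p).1 j).2 * (g'.1 j).1) = 0)
    (hZ : (f p).1 - (g p).1 = 0)
    (hne : f' ≠ g') :
    ∃ ε > 0, ∀ s ∈ Set.Icc a b, (f s).1 - (g s).1 = 0 → |s - p| < ε → s = p := by
  have hderiv : HasDerivAt (fun s => (f s).1 - (g s).1) (f'.1 - g'.1) p := (hf.sub hg).fst
  have hderiv_ne : f'.1 - g'.1 ≠ 0 := fun h =>
    hne (eq_of_heisenbergContactForm_eq_zero_of_fst_eq hfhor hghor (sub_eq_zero.mp hZ)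
      (sub_eq_zero.mp h))
  obtain ⟨ε, hε, hisol⟩ := hderiv.exists_pos_forall_eq_of_apply_eq hderiv_ne
  exact ⟨ε, hε, fun s _ hs => hisol s (hs.trans hZ.symm)⟩

/-- Suppose `f, g : [a,b] → ℝ^{2n+1} = ℍⁿ` are differentiable at `p`, with horizontal
derivatives `f'(p)`, `g'(p)` (i.e. lying in the kernel of the contact form
`α = dt + 2Σⱼ(xⱼ dyⱼ − yⱼ dxⱼ)` at `f(p)`, `g(p)` resp.), `f(p) − g(p)` lies in the
center `Z = {z = 0}`, and `f'(p) ≠ g'(p)`.  Then `p` is an isolated point of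
`S = {s ∈ [a,b] : f(s) − g(s) ∈ Z}`.  Here `ℝ^{2n+1}` is written as
`(Fin n → ℝ × ℝ) × ℝ` and membership in `Z` means vanishing of the first component. -/
theorem isolated_point_of_center_difference (n : ℕ) (a b : ℝ)
    (f g : ℝ → (Fin n → ℝ × ℝ) × ℝ) (p : ℝ) (hp : p ∈ Set.Icc a b)
    (f' g' : (Fin n → ℝ × ℝ) × ℝ)
    (hf : HasDerivAt f f' p) (hg : HasDerivAt g g' p)
    (hfhor : f'.2 + 2 * ∑ j : Fin n,
      (((f p).1 j).1 * (f'.1 j).2 - ((f p).1 j).2 * (f'.1 j).1) = 0)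
    (hghor : g'.2 + 2 * ∑ j : Fin n,
      (((g p).1 j).1 * (g'.1 j).2 - ((g p).1 j).2 * (g'.1 j).1) = 0)
    (hZ : (f p).1 - (g p).1 = 0)
    (hne : f' ≠ g') :
    ∃ ε > 0, ∀ s ∈ Set.Icc a b, (f s).1 - (g s).1 = 0 → |s - p| < ε → s = p :=
  isolated_point_of_center_difference_general n a b f g p f' g' hf hg hfhor hghor hZ hne
end
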